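/- arXiv:1310.6881 — 2 statements merged into one kernel-verified Lean document; each statement's English description precedes it below -/
import Mathlib

section
/- Let x_1, ..., x_n be real numbers with x_1 + ... + x_n = 0. Then ∑_{i=1}^{n} x_i ∏_{j≠i} (1 - e^{-x_j}) = ∑_{i=1}^{n} x_i ∏_{j≠i} (e^{x_j} - 1). -/
/-- Lemma B.2: if `x₁ + ⋯ + xₙ = 0` then
`∑ᵢ xᵢ ∏_{j≠i} (1 - e^{-xⱼ}) = ∑ᵢ xᵢ ∏_{j≠i} (e^{xⱼ} - 1)`. -/
theorem sum_mul_prod_one_sub_exp_neg_eq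
    (n : ℕ) (hn : 1 ≤ n) (x : Fin n → ℝ) (hx : ∑ i, x i = 0) :
    ∑ i, x i * ∏ j ∈ Finset.univ.erase i, (1 - Real.exp (-(x j))) =
      ∑ i, x i * ∏ j ∈ Finset.univ.erase i, (Real.exp (x j) - 1) := by
  have key : ∀ i : Fin n, ∏ j ∈ Finset.univ.erase i, (1 - Real.exp (-(x j))) =
      Real.exp (x i) * ∏ j ∈ Finset.univ.erase i, (Real.exp (x j) - 1) := by
    intro i
    have h1 : ∀ j, (1 : ℝ) - Real.exp (-(x j)) =
        Real.exp (-(x j)) * (Real.exp (x j) - 1) := by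
      intro j
      rw [mul_sub, mul_one, ← Real.exp_add]
      simp
    calc ∏ j ∈ Finset.univ.erase i, (1 - Real.exp (-(x j)))
        = ∏ j ∈ Finset.univ.erase i, Real.exp (-(x j)) * (Real.exp (x j) - 1) := by
          simp_rw [h1]
      _ = (∏ j ∈ Finset.univ.erase i, Real.exp (-(x j))) *
            ∏ j ∈ Finset.univ.erase i, (Real.exp (x j) - 1) := Finset.prod_mul_distrib
      _ = Real.exp (x i) * ∏ j ∈ Finset.univ.erase i, (Real.exp (x j) - 1) := by
          congr 1
          rw [← Real.exp_sum]
          congr 1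
          have h0 := Finset.add_sum_erase Finset.univ x (Finset.mem_univ i)
          have h2 : ∑ j ∈ Finset.univ.erase i, x j = -(x i) := by linarith [h0, hx]
          rw [Finset.sum_neg_distrib, h2, neg_neg]
  simp_rw [key]
  rw [← sub_eq_zero, ← Finset.sum_sub_distrib]
  have : ∀ i : Fin n, x i * (Real.exp (x i) *
        ∏ j ∈ Finset.univ.erase i, (Real.exp (x j) - 1)) -
      x i * ∏ j ∈ Finset.univ.erase i, (Real.exp (x j) - 1) =
      x i * ∏ j, (Real.exp (x j) - 1) := by
    intro i
    rw [← Finset.mul_prod_erase Finset.univ _ (Finset.mem_univ i)]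
    ring
  simp_rw [this, ← Finset.sum_mul, hx, zero_mul]
end

section
/- Let ω be irrational with continued fraction denominators (q_n), and for n ≥ 0 let α_n(ω) := min{ ‖ων‖ : ν ∈ ℤ, 0 < |ν| ≤ 2^n }. Then ∑_{n=0}^{∞} 2^{-n} log(1/α_n(ω)) < ∞ if and only if ∑_{k=0}^{∞} (1/q_k) log q_{k+1} < ∞. -/
/-- Distance from a real number to the nearest integer. -/
noncomputable def distNearestInt (u : ℝ) : ℝ := ⨅ ν : ℤ, |u - (ν : ℝ)|

/-- The denominators `q_n` of the continued fraction expansion of `ω`. -/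
noncomputable def cfDen (ω : ℝ) (n : ℕ) : ℝ := (GenContFract.of ω).dens n

/-- `α_n(ω) = min { ‖ων‖ : ν ∈ ℤ, 0 < |ν| ≤ 2ⁿ }`, as in equation (5.3). -/
noncomputable def alphaMin (ω : ℝ) (n : ℕ) : ℝ :=
  sInf {r : ℝ | ∃ ν : ℤ, ν ≠ 0 ∧ |ν| ≤ 2 ^ n ∧ r = distNearestInt (ω * ν)}

/-!
Let `q_k`, `p_k` be the convergent denominators and numerators of `ω`, and `e_k = ω q_k - p_k`.
The `e_k` alternate in sign, so the determinant identity `p_k q_{k+1} - p_{k+1} q_k = ±1`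
reads `q_{k+1} |e_k| + q_k |e_{k+1}| = 1`; with `q_{k+2} ≥ 2 q_k` this gives
`1 / (2 q_{k+1}) ≤ |e_k| ≤ 1 / q_{k+1}`. Writing `(ν, m)` in the basis
`(q_k, p_k), (q_{k+1}, p_{k+1})` shows `|e_k| ≤ |ω ν - m|` whenever `0 < |ν| < q_{k+1}`, so
`α_n(ω) = |e_k|` for the `k = k(n)` with `q_k ≤ 2ⁿ < q_{k+1}`, and the first series is comparable
to `∑ₙ 2⁻ⁿ log q_{k(n)+1}`.

Let `c_k = ⌈log₂ q_k⌉`, so that `2^{-c_k} ≍ 1 / q_k`. Every `n` with `k(n) = k` has the form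
`c_k + j`, which bounds that series by `2 ∑ₖ (1/q_k) log q_{k+1}`. Conversely the `k`-th term of
the latter is at most twice the `c_k`-th term of the former, and `c_{k+2} > c_k` makes `k ↦ c_k`
at most two-to-one.
-/

theorem abs_add_eq_abs_add_abs_of_mul_nonneg {α : Type*} [Ring α] [LinearOrder α]
    [IsStrictOrderedRing α] {a b : α} (h : 0 ≤ a * b) : |a + b| = |a| + |b| :=
  (abs_add_eq_add_abs_iff a b).mpr (mul_nonneg_iff.mp h)

theorem summable_iff_of_le_of_le_add {ι : Type*} {f g c : ι → ℝ} (hg : 0 ≤ g) (hgf : g ≤ f)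
    (hfg : f ≤ g + c) (hc : Summable c) : Summable f ↔ Summable g :=
  ⟨fun h => h.of_nonneg_of_le hg hgf, fun h => (h.add hc).of_nonneg_of_le (hg.trans hgf) hfg⟩

theorem Nat.pow_clog_lt_mul {b m : ℕ} (hb : 1 < b) (hm : 0 < m) : b ^ Nat.clog b m < b * m := by
  rcases (Nat.one_le_iff_ne_zero.mpr hm.ne').eq_or_lt with rfl | hm1
  · simpa using hb
  · calc b ^ Nat.clog b m = b * b ^ (Nat.clog b m).pred := by
          rw [← pow_succ', Nat.succ_pred_eq_of_pos (Nat.clog_pos hb hm1)]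
      _ < b * m := Nat.mul_lt_mul_of_pos_left (Nat.pow_pred_clog_lt_self hb hm1) (by omega)

theorem distNearestInt_le (u : ℝ) (m : ℤ) : distNearestInt u ≤ |u - m| :=
  ciInf_le ⟨0, by rintro _ ⟨ν, rfl⟩; exact abs_nonneg _⟩ m

theorem le_distNearestInt {u c : ℝ} (h : ∀ m : ℤ, c ≤ |u - m|) : c ≤ distNearestInt u :=
  le_ciInf h

section IntegerApproximation

variable {ω : ℝ} {p p' q q' : ℤ}

theorem mul_abs_add_mul_abs_eq_one (hdet : |p * q' - p' * q| = 1) (hq : 0 ≤ q) (hq' : 0 ≤ q')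
    (hsign : (ω * q - p) * (ω * q' - p') ≤ 0) :
    q' * |ω * q - p| + q * |ω * q' - p'| = 1 := by
  have hdiff :
      (q' : ℝ) * (ω * q - p) + -(q * (ω * q' - p')) = -((p * q' - p' * q : ℤ) : ℝ) := by
    push_cast; ring
  have hprod : 0 ≤ (q' : ℝ) * (ω * q - p) * -(q * (ω * q' - p')) := by
    have : (0 : ℝ) ≤ q' * q := by positivity
    nlinarith
  calc q' * |ω * q - p| + q * |ω * q' - p'| = |q' * (ω * q - p)| + |-(q * (ω * q' - p'))| := by
        rw [abs_neg, abs_mul, abs_mul, abs_of_nonneg (by exact_mod_cast hq : (0 : ℝ) ≤ q),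
          abs_of_nonneg (by exact_mod_cast hq' : (0 : ℝ) ≤ q')]
    _ = 1 := by
      rw [← abs_add_eq_abs_add_abs_of_mul_nonneg hprod, hdiff, abs_neg, ← Int.cast_abs, hdet,
        Int.cast_one]

theorem abs_mul_sub_le_of_abs_det_eq_one (hdet : |p * q' - p' * q| = 1) (hq : 0 ≤ q)
    (hsign : (ω * q - p) * (ω * q' - p') ≤ 0) {ν m : ℤ} (hν : ν ≠ 0) (hνq' : |ν| < q') :
    |ω * q - p| ≤ |ω * ν - m| := by
  set D := p * q' - p' * q
  have hD : D * D = 1 := by rw [← abs_mul_abs_self, hdet, one_mul]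
  set a := D * (m * q' - ν * p')
  set b := D * (ν * p - m * q)
  have hν_eq : a * q + b * q' = ν := by linear_combination ν * hD
  have hm_eq : a * p + b * p' = m := by linear_combination m * hD
  have hdecomp : ω * ν - m = a * (ω * q - p) + b * (ω * q' - p') := by
    rw [← hν_eq, ← hm_eq]; push_cast; ring
  have hq' : 0 < q' := (abs_nonneg ν).trans_lt hνq'
  -- `a q` and `b q'` of the same sign would force `q' ≤ |ν|`.
  have hb_of_mul_nonneg (hab : 0 ≤ a * b) : b = 0 := by
    by_contra hb
    have hsum : |ν| = |a * q| + |b * q'| := by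
      rw [← hν_eq, abs_add_eq_abs_add_abs_of_mul_nonneg]
      nlinarith [mul_nonneg hq hq'.le]
    rw [abs_mul b, abs_of_pos hq'] at hsum
    nlinarith [abs_nonneg (a * q), Int.one_le_abs hb]
  have ha : a ≠ 0 := by
    rintro ha
    have hb := hb_of_mul_nonneg (by simp [ha])
    simp [ha, hb] at hν_eq
    exact hν hν_eq.symm
  have hprod : 0 ≤ a * (ω * q - p) * (b * (ω * q' - p')) := by
    rcases eq_or_ne b 0 with hb | hb
    · simp [hb]
    · have hab : (a : ℝ) * b ≤ 0 := by
        exact_mod_cast (not_le.mp (mt hb_of_mul_nonneg hb)).le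
      nlinarith
  calc |ω * q - p| ≤ |(a : ℝ)| * |ω * q - p| :=
        le_mul_of_one_le_left (abs_nonneg _) (by exact_mod_cast Int.one_le_abs ha)
    _ ≤ |a * (ω * q - p)| + |b * (ω * q' - p')| := by
        rw [abs_mul]; linarith [abs_nonneg (b * (ω * q' - p'))]
    _ = |ω * ν - m| := by rw [hdecomp, abs_add_eq_abs_add_abs_of_mul_nonneg hprod]

end IntegerApproximation

structure TwoStepDoubling (q : ℕ → ℕ) : Prop where
  zero : q 0 = 1
  mono : Monotone q
  two_mul_le : ∀ k, 2 * q k ≤ q (k + 2)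

noncomputable def bracketIdx (q : ℕ → ℕ) (n : ℕ) : ℕ := sInf {k | 2 ^ n < q (k + 1)}

namespace TwoStepDoubling

variable {q : ℕ → ℕ}

theorem one_le (hq : TwoStepDoubling q) (k : ℕ) : 1 ≤ q k :=
  hq.zero ▸ hq.mono k.zero_le

theorem two_pow_le (hq : TwoStepDoubling q) (k : ℕ) : 2 ^ k ≤ q (2 * k) := by
  induction k with
  | zero => simp [hq.zero]
  | succ k ih =>
    rw [pow_succ', Nat.mul_succ]
    exact (Nat.mul_le_mul_left 2 ih).trans (hq.two_mul_le _)

theorem clog_lt_clog_add_two (hq : TwoStepDoubling q) (k : ℕ) :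
    Nat.clog 2 (q k) < Nat.clog 2 (q (k + 2)) := by
  rw [Nat.lt_clog_iff_pow_lt one_lt_two]
  exact (Nat.pow_clog_lt_mul one_lt_two (hq.one_le k)).trans_le (hq.two_mul_le k)

theorem bracketIdx_spec (hq : TwoStepDoubling q) (n : ℕ) :
    q (bracketIdx q n) ≤ 2 ^ n ∧ 2 ^ n < q (bracketIdx q n + 1) := by
  have hne : {k | 2 ^ n < q (k + 1)}.Nonempty :=
    ⟨2 * n + 1,
      (Nat.pow_lt_pow_right one_lt_two n.lt_succ_self).trans_le (hq.two_pow_le (n + 1))⟩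
  refine ⟨?_, Nat.sInf_mem hne⟩
  cases h : bracketIdx q n with
  | zero => simpa [hq.zero] using Nat.one_le_two_pow
  | succ j =>
    have : j < bracketIdx q n := h ▸ j.lt_succ_self
    simpa using Nat.notMem_of_lt_sInf this

theorem le_bracketIdx_clog (hq : TwoStepDoubling q) (k : ℕ) :
    k ≤ bracketIdx q (Nat.clog 2 (q k)) := by
  by_contra! h
  have := (hq.bracketIdx_spec (Nat.clog 2 (q k))).2
  have h1 : q (bracketIdx q (Nat.clog 2 (q k)) + 1) ≤ q k := hq.mono h
  have h2 := Nat.le_pow_clog one_lt_two (q k)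
  omega

theorem clog_bracketIdx_le (hq : TwoStepDoubling q) (n : ℕ) :
    Nat.clog 2 (q (bracketIdx q n)) ≤ n :=
  Nat.clog_le_of_le_pow (hq.bracketIdx_spec n).1

theorem half_pow_clog_le_one_div (hq : TwoStepDoubling q) (k : ℕ) :
    (1 / 2 : ℝ) ^ Nat.clog 2 (q k) ≤ 1 / q k := by
  rw [one_div_pow]
  gcongr
  · exact_mod_cast hq.one_le k
  · exact_mod_cast Nat.le_pow_clog one_lt_two (q k)

theorem one_div_le_two_mul_half_pow_clog (hq : TwoStepDoubling q) (k : ℕ) :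
    1 / (q k : ℝ) ≤ 2 * (1 / 2) ^ Nat.clog 2 (q k) := by
  have h : ((2 ^ Nat.clog 2 (q k) : ℕ) : ℝ) ≤ 2 * q k := by
    exact_mod_cast (Nat.pow_clog_lt_mul one_lt_two (hq.one_le k)).le
  push_cast at h
  rw [one_div_pow, ← div_eq_mul_one_div,
    div_le_div_iff₀ (by exact_mod_cast hq.one_le k) (by positivity)]
  linarith

theorem log_nonneg (hq : TwoStepDoubling q) (k : ℕ) : 0 ≤ Real.log (q k) :=
  Real.log_nonneg (by exact_mod_cast hq.one_le k)

theorem summable_bracket_of_summable (hq : TwoStepDoubling q)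
    (h : Summable fun k : ℕ => 1 / (q k : ℝ) * Real.log (q (k + 1))) :
    Summable fun n : ℕ => (1 / 2 : ℝ) ^ n * Real.log (q (bracketIdx q n + 1)) := by
  set u : ℕ → ℝ := fun k => (1 / 2) ^ Nat.clog 2 (q k) * Real.log (q (k + 1))
  have hu : Summable u := h.of_nonneg_of_le (fun k => by positivity [hq.log_nonneg (k + 1)])
    fun k => mul_le_mul_of_nonneg_right (hq.half_pow_clog_le_one_div k) (hq.log_nonneg _)
  have hprod := hu.mul_of_nonneg summable_geometric_two
    (fun k => by positivity [hq.log_nonneg (k + 1)]) fun j => by positivity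
  set e : ℕ → ℕ × ℕ := fun n => (bracketIdx q n, n - Nat.clog 2 (q (bracketIdx q n)))
  have he : Function.Injective e := by
    intro n n' hnn'
    simp only [e, Prod.mk.injEq] at hnn'
    have := hq.clog_bracketIdx_le n
    have := hq.clog_bracketIdx_le n'
    rw [hnn'.1] at *
    omega
  refine (hprod.comp_injective he).congr fun n => ?_
  simp only [Function.comp, u, e]
  rw [mul_right_comm, ← pow_add, Nat.add_sub_cancel' (hq.clog_bracketIdx_le n)]

theorem summable_of_summable_bracket (hq : TwoStepDoubling q)
    (h : Summable fun n : ℕ => (1 / 2 : ℝ) ^ n * Real.log (q (bracketIdx q n + 1))) :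
    Summable fun k : ℕ => 1 / (q k : ℝ) * Real.log (q (k + 1)) := by
  set S : ℕ → ℝ := fun n => (1 / 2 : ℝ) ^ n * Real.log (q (bracketIdx q n + 1))
  have hmono (i : ℕ) : StrictMono fun k => Nat.clog 2 (q (2 * k + i)) :=
    strictMono_nat_of_lt_succ fun k => by
      simpa [Nat.mul_succ, Nat.add_right_comm] using hq.clog_lt_clog_add_two (2 * k + i)
  have hS : Summable fun k => S (Nat.clog 2 (q k)) :=
    .even_add_odd (h.comp_injective (hmono 0).injective) (h.comp_injective (hmono 1).injective)
  refine (hS.mul_left 2).of_nonneg_of_le (fun k => by positivity [hq.log_nonneg (k + 1)])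
    fun k => ?_
  calc 1 / (q k : ℝ) * Real.log (q (k + 1))
      ≤ 2 * (1 / 2) ^ Nat.clog 2 (q k) *
          Real.log (q (bracketIdx q (Nat.clog 2 (q k)) + 1)) := by
        gcongr
        · exact hq.one_div_le_two_mul_half_pow_clog k
        · exact Nat.cast_pos.mpr (hq.one_le _)
        · exact hq.mono (Nat.succ_le_succ (hq.le_bracketIdx_clog k))
    _ = 2 * S (Nat.clog 2 (q k)) := by simp only [S]; ring

theorem summable_bracket_iff (hq : TwoStepDoubling q) :
    (Summable fun n : ℕ => (1 / 2 : ℝ) ^ n * Real.log (q (bracketIdx q n + 1))) ↔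
      Summable fun k : ℕ => 1 / (q k : ℝ) * Real.log (q (k + 1)) :=
  ⟨hq.summable_of_summable_bracket, hq.summable_bracket_of_summable⟩

end TwoStepDoubling

open GenContFract

-- Entry `n` of `partDens` is the classical partial quotient `a_{n+1}`.
noncomputable def cfPartDenNat (ω : ℝ) (n : ℕ) : ℕ :=
  ⌊((GenContFract.of ω).partDens.get? n).getD 0⌋₊

noncomputable def cfDenNat (ω : ℝ) : ℕ → ℕ
  | 0 => 1
  | 1 => cfPartDenNat ω 0
  | n + 2 => cfPartDenNat ω (n + 1) * cfDenNat ω (n + 1) + cfDenNat ω n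

noncomputable def cfNumInt (ω : ℝ) : ℕ → ℤ
  | 0 => ⌊ω⌋
  | 1 => cfPartDenNat ω 0 * ⌊ω⌋ + 1
  | n + 2 => cfPartDenNat ω (n + 1) * cfNumInt ω (n + 1) + cfNumInt ω n

noncomputable def cfErr (ω : ℝ) (k : ℕ) : ℝ := ω * cfDenNat ω k - cfNumInt ω k

namespace Irrational

variable {ω : ℝ}

theorem not_terminatedAt (hω : Irrational ω) (n : ℕ) : ¬(GenContFract.of ω).TerminatedAt n :=
  fun h => hω <| by
    obtain ⟨q, hq⟩ := (terminates_iff_rat ω).mp ⟨n, h⟩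
    exact ⟨q, hq.symm⟩

theorem of_s_get?_eq (hω : Irrational ω) (n : ℕ) :
    (GenContFract.of ω).s.get? n = some ⟨1, cfPartDenNat ω n⟩ := by
  obtain ⟨⟨a, b⟩, hs⟩ := Option.ne_none_iff_exists'.mp (hω.not_terminatedAt n)
  have hb := partDen_eq_s_b hs
  obtain ⟨z, rfl⟩ := exists_int_eq_of_partDen hb
  have hz : (1 : ℝ) ≤ z := of_one_le_get?_partDen hb
  lift z to ℕ using by exact_mod_cast zero_le_one.trans hz
  have ha : a = 1 := of_partNum_eq_one (partNum_eq_s_a hs)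
  rw [hs, ha, cfPartDenNat, hb]
  simp

theorem one_le_cfPartDenNat (hω : Irrational ω) (n : ℕ) : 1 ≤ cfPartDenNat ω n := by
  exact_mod_cast (of_one_le_get?_partDen (partDen_eq_s_b (hω.of_s_get?_eq n)) :
    (1 : ℝ) ≤ cfPartDenNat ω n)

theorem cfDenNat_cast (hω : Irrational ω) (n : ℕ) :
    (cfDenNat ω n : ℝ) = (GenContFract.of ω).dens n := by
  induction n using Nat.twoStepInduction with
  | zero => simp [cfDenNat]
  | one => simp [cfDenNat, first_den_eq (hω.of_s_get?_eq 0)]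
  | more n ih₁ ih₂ =>
    rw [dens_recurrence (hω.of_s_get?_eq (n + 1)) ih₁.symm ih₂.symm, cfDenNat]
    push_cast; ring

theorem cfNumInt_cast (hω : Irrational ω) (n : ℕ) :
    (cfNumInt ω n : ℝ) = (GenContFract.of ω).nums n := by
  induction n using Nat.twoStepInduction with
  | zero => simp [cfNumInt, zeroth_num_eq_h, of_h_eq_floor]
  | one => simp [cfNumInt, first_num_eq (hω.of_s_get?_eq 0), of_h_eq_floor]
  | more n ih₁ ih₂ =>
    rw [nums_recurrence (hω.of_s_get?_eq (n + 1)) ih₁.symm ih₂.symm, cfNumInt]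
    push_cast; ring

theorem abs_cfNumInt_mul_cfDenNat_sub_eq_one (hω : Irrational ω) (k : ℕ) :
    |cfNumInt ω k * cfDenNat ω (k + 1) - cfNumInt ω (k + 1) * cfDenNat ω k| = 1 := by
  have h : (GenContFract.of ω).nums k * (GenContFract.of ω).dens (k + 1) -
      (GenContFract.of ω).dens k * (GenContFract.of ω).nums (k + 1) = (-1) ^ (k + 1) :=
    (SimpContFract.of ω).determinant (hω.not_terminatedAt k)
  have : ((cfNumInt ω k * cfDenNat ω (k + 1) - cfNumInt ω (k + 1) * cfDenNat ω k : ℤ) : ℝ) =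
      (-1) ^ (k + 1) := by
    push_cast
    rw [hω.cfNumInt_cast, hω.cfNumInt_cast, hω.cfDenNat_cast, hω.cfDenNat_cast, ← h]
    ring
  rw [← Int.cast_inj (α := ℝ), Int.cast_abs, this, abs_neg_one_pow, Int.cast_one]

theorem twoStepDoubling_cfDenNat (hω : Irrational ω) : TwoStepDoubling (cfDenNat ω) := by
  have hrec (n : ℕ) : cfDenNat ω (n + 1) + cfDenNat ω n ≤ cfDenNat ω (n + 2) :=
    Nat.add_le_add_right (Nat.le_mul_of_pos_left _ (hω.one_le_cfPartDenNat _)) _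
  have hmono : Monotone (cfDenNat ω) := monotone_nat_of_le_succ fun n => by
    cases n with
    | zero => exact hω.one_le_cfPartDenNat 0
    | succ n => exact (Nat.le_add_right _ _).trans (hrec n)
  exact ⟨rfl, hmono, fun k => by
    have : cfDenNat ω k ≤ cfDenNat ω (k + 1) := hmono k.le_succ
    have := hrec k
    omega⟩

theorem neg_one_pow_mul_cfErr_pos (hω : Irrational ω) (k : ℕ) : 0 < (-1) ^ k * cfErr ω k := by
  obtain ⟨ifp', hsucc, -⟩ :=
    IntFractPair.exists_succ_get?_stream_of_gcf_of_get?_eq_some (hω.of_s_get?_eq k)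
  obtain ⟨ifp, hifp, hfr, -⟩ := IntFractPair.succ_nth_stream_eq_some_iff.mp hsucc
  have hfr_pos : 0 < ifp.fr := (IntFractPair.nth_stream_fr_nonneg hifp).lt_of_ne' hfr
  have hsub := sub_convs_eq hifp
  simp only [if_neg hfr] at hsub
  have hB : ((GenContFract.of ω).contsAux (k + 1)).b = cfDenNat ω k := by
    rw [hω.cfDenNat_cast, den_eq_conts_b, nth_cont_eq_succ_nth_contAux]
  have hq : (0 : ℝ) < cfDenNat ω k := Nat.cast_pos.mpr (hω.twoStepDoubling_cfDenNat.one_le k)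
  have hpB : 0 ≤ ((GenContFract.of ω).contsAux k).b := zero_le_of_contsAux_b
  have herr : cfErr ω k = cfDenNat ω k * (ω - (GenContFract.of ω).convs k) := by
    rw [conv_eq_num_div_den, cfErr, ← hω.cfNumInt_cast, ← hω.cfDenNat_cast]
    field_simp
  rw [herr, hsub, hB, mul_left_comm, ← mul_div_assoc, ← pow_add, ← two_mul, pow_mul, neg_one_sq,
    one_pow]
  positivity

theorem cfErr_mul_cfErr_succ_nonpos (hω : Irrational ω) (k : ℕ) :
    cfErr ω k * cfErr ω (k + 1) ≤ 0 := by
  have h := mul_pos (hω.neg_one_pow_mul_cfErr_pos k) (hω.neg_one_pow_mul_cfErr_pos (k + 1))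
  have hsq : ((-1 : ℝ) ^ k) ^ 2 = 1 := by rw [← pow_mul, pow_mul', neg_one_sq, one_pow]
  have : (-1) ^ k * cfErr ω k * ((-1) ^ (k + 1) * cfErr ω (k + 1)) =
      -(((-1 : ℝ) ^ k) ^ 2 * (cfErr ω k * cfErr ω (k + 1))) := by ring
  rw [this, hsq, one_mul] at h
  linarith

theorem cfDenNat_succ_mul_abs_cfErr_add_eq_one (hω : Irrational ω) (k : ℕ) :
    (cfDenNat ω (k + 1) : ℝ) * |cfErr ω k| + cfDenNat ω k * |cfErr ω (k + 1)| = 1 := by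
  have hsign := hω.cfErr_mul_cfErr_succ_nonpos k
  simp only [cfErr] at hsign ⊢
  exact_mod_cast mul_abs_add_mul_abs_eq_one (hω.abs_cfNumInt_mul_cfDenNat_sub_eq_one k)
    (Nat.cast_nonneg _) (Nat.cast_nonneg _) (by exact_mod_cast hsign)

theorem cfDenNat_succ_mul_abs_cfErr_le_one (hω : Irrational ω) (k : ℕ) :
    (cfDenNat ω (k + 1) : ℝ) * |cfErr ω k| ≤ 1 := by
  have := hω.cfDenNat_succ_mul_abs_cfErr_add_eq_one k
  have : (0 : ℝ) ≤ cfDenNat ω k * |cfErr ω (k + 1)| := by positivity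
  linarith

theorem one_le_two_mul_cfDenNat_succ_mul_abs_cfErr (hω : Irrational ω) (k : ℕ) :
    1 ≤ 2 * (cfDenNat ω (k + 1) : ℝ) * |cfErr ω k| := by
  have h := hω.cfDenNat_succ_mul_abs_cfErr_add_eq_one k
  have h' := hω.cfDenNat_succ_mul_abs_cfErr_le_one (k + 1)
  have h2 : (2 * cfDenNat ω k : ℝ) ≤ cfDenNat ω (k + 2) := by
    exact_mod_cast hω.twoStepDoubling_cfDenNat.two_mul_le k
  nlinarith [abs_nonneg (cfErr ω (k + 1))]

theorem abs_cfErr_le (hω : Irrational ω) (k : ℕ) {ν m : ℤ} (hν : ν ≠ 0)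
    (hνq : |ν| < cfDenNat ω (k + 1)) : |cfErr ω k| ≤ |ω * ν - m| := by
  have hsign := hω.cfErr_mul_cfErr_succ_nonpos k
  simp only [cfErr] at hsign ⊢
  exact_mod_cast abs_mul_sub_le_of_abs_det_eq_one (hω.abs_cfNumInt_mul_cfDenNat_sub_eq_one k)
    (Nat.cast_nonneg _) (by exact_mod_cast hsign) hν hνq

theorem alphaMin_eq_abs_cfErr (hω : Irrational ω) {n k : ℕ} (hk : cfDenNat ω k ≤ 2 ^ n)
    (hk' : 2 ^ n < cfDenNat ω (k + 1)) : alphaMin ω n = |cfErr ω k| := by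
  have hlow (ν : ℤ) (hν : ν ≠ 0) (hνn : |ν| ≤ 2 ^ n) : |cfErr ω k| ≤ distNearestInt (ω * ν) :=
    le_distNearestInt fun m => hω.abs_cfErr_le k hν (hνn.trans_lt (by exact_mod_cast hk'))
  have hq := hω.twoStepDoubling_cfDenNat.one_le k
  have hqn : |(cfDenNat ω k : ℤ)| ≤ 2 ^ n := by rw [Nat.abs_cast]; exact_mod_cast hk
  refine IsLeast.csInf_eq ⟨⟨cfDenNat ω k, by omega, hqn, ?_⟩, ?_⟩
  · refine le_antisymm (hlow _ (by omega) hqn) ?_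
    simpa [cfErr] using distNearestInt_le (ω * cfDenNat ω k) (cfNumInt ω k)
  · rintro r ⟨ν, hν, hνn, rfl⟩
    exact hlow ν hν hνn

theorem log_inv_alphaMin_bounds (hω : Irrational ω) (n : ℕ) :
    Real.log (cfDenNat ω (bracketIdx (cfDenNat ω) n + 1)) ≤ Real.log (1 / alphaMin ω n) ∧
      Real.log (1 / alphaMin ω n) ≤
        Real.log (cfDenNat ω (bracketIdx (cfDenNat ω) n + 1)) + Real.log 2 := by
  set k := bracketIdx (cfDenNat ω) n
  obtain ⟨hk, hk'⟩ := hω.twoStepDoubling_cfDenNat.bracketIdx_spec n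
  rw [hω.alphaMin_eq_abs_cfErr hk hk']
  have hupper := hω.cfDenNat_succ_mul_abs_cfErr_le_one k
  have hlower := hω.one_le_two_mul_cfDenNat_succ_mul_abs_cfErr k
  have hq : (0 : ℝ) < cfDenNat ω (k + 1) :=
    Nat.cast_pos.mpr (hω.twoStepDoubling_cfDenNat.one_le _)
  have he : 0 < |cfErr ω k| := by
    by_contra! h
    nlinarith [abs_nonneg (cfErr ω k)]
  constructor
  · exact Real.log_le_log hq (by rw [le_div_iff₀ he]; linarith)
  · rw [← Real.log_mul hq.ne' two_ne_zero]
    exact Real.log_le_log (by positivity) (by rw [div_le_iff₀ he]; linarith)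

end Irrational

/-- Equivalence of the two formulations of the Bryuno condition:
`∑ₙ 2⁻ⁿ log(1/αₙ(ω)) < ∞` iff `∑ₖ (1/qₖ) log q_{k+1} < ∞`. -/
theorem bryuno_condition_equivalence (ω : ℝ) (hω : Irrational ω) :
    (Summable fun n : ℕ => (1 / 2 : ℝ) ^ n * Real.log (1 / alphaMin ω n)) ↔
      Summable fun k : ℕ => 1 / cfDen ω k * Real.log (cfDen ω (k + 1)) := by
  have hq := hω.twoStepDoubling_cfDenNat
  simp only [cfDen, ← hω.cfDenNat_cast]
  rw [← hq.summable_bracket_iff]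
  refine summable_iff_of_le_of_le_add
    (fun n => by positivity [hq.log_nonneg (bracketIdx (cfDenNat ω) n + 1)])
    (fun n => ?_) (fun n => ?_) (summable_geometric_two.mul_right (Real.log 2))
  · exact mul_le_mul_of_nonneg_left (hω.log_inv_alphaMin_bounds n).1 (by positivity)
  · simp only [Pi.add_apply, ← mul_add]
    exact mul_le_mul_of_nonneg_left (hω.log_inv_alphaMin_bounds n).2 (by positivity)
end
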